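/- arXiv:2511.21327 — 2 statements merged into one kernel-verified Lean document; each statement's English description precedes it below -/
import Mathlib

section
/- With the bang-bang optimal storage strategy s*(P) = s_max if P < δ·EP and s*(P) = s_min if P > δ·EP (arbitrary in [s_min, s_max] if P = δ·EP), the optimal one-period profit π*(P) = P·(s - s*(P)) + δ·EP·(s*(P) - s) satisfies: π*(P) = (P - δ·EP)·(s - s_min)·𝟙(P > δ·EP) + (δ·EP - P)·(s_max - s)·𝟙(P < δ·EP). In particular π*(P) equals the payoff of a cap contract with strike δ·EP and volume (s - s_min) plus a floor contract with strike δ·EP and volume (s_max - s). -/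
theorem stmt5_general (smin smax s P δ EP sstar : ℝ)
    (h1 : P < δ * EP → sstar = smax)
    (h2 : P > δ * EP → sstar = smin) :
    P * (s - sstar) + δ * EP * (sstar - s) =
      (if P > δ * EP then (P - δ * EP) * (s - smin) else 0) +
      (if P < δ * EP then (δ * EP - P) * (smax - s) else 0) := by
  rcases lt_trichotomy P (δ * EP) with below | at_strike | above
  · rw [h1 below, if_neg below.asymm, if_pos below]
    ring
  · rw [at_strike, if_neg (lt_irrefl _), if_neg (lt_irrefl _)]
    ring
  · rw [h2 above, if_pos above, if_neg above.asymm]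
    ring

/-- The optimal one-period storage profit (including the shadow value `δ·EP` of closing
charge) decomposes as a cap with strike `δ·EP` and volume `(s - s_min)` plus a floor with
strike `δ·EP` and volume `(s_max - s)`. -/
theorem stmt5 (smin smax s P δ EP sstar : ℝ)
    (h1 : P < δ * EP → sstar = smax)
    (h2 : P > δ * EP → sstar = smin)
    (h3 : sstar ∈ Set.Icc smin smax) :
    P * (s - sstar) + δ * EP * (sstar - s) =
      (if P > δ * EP then (P - δ * EP) * (s - smin) else 0) +
      (if P < δ * EP then (δ * EP - P) * (smax - s) else 0) :=
  stmt5_general smin smax s P δ EP sstar h1 h2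
end

section
/- For any real P and reals K, s_min ≤ s ≤ s_max: Cap(P; K, s - s_min) + Floor(P; K, s_max - s) = (P - K)·(s - s_min) if P ≥ K, and (K - P)·(s_max - s) if P < K, where Cap(P; K, V) = (P - K)·V·𝟙(P ≥ K) and Floor(P; K, V) = (K - P)·V·𝟙(P ≤ K). Moreover, for any closing state s⁺ ∈ [s_min, s_max], P·(s - s*) - K·(s⁺ - s*) = Cap(P; K, s - s_min) + Floor(P; K, s_max - s) + K·(s - s⁺), where s* = s_min if P ≥ K and s* = s_max if P < K. -/
/-! The indicators of the cap and the floor overlap only at `P = K`, where both payoffs vanish.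
Once the two branches are merged, each choice of the bang-bang closing state `s*` leaves a ring
identity. -/

theorem cap_add_floor_eq (P K a b : ℝ) :
    ((if K ≤ P then (P - K) * a else 0) + if P ≤ K then (K - P) * b else 0) =
      if K ≤ P then (P - K) * a else (K - P) * b := by
  by_cases hKP : K ≤ P
  · by_cases hPK : P ≤ K
    · obtain rfl := le_antisymm hPK hKP
      simp
    · simp [hKP, hPK]
  · simp [hKP, le_of_not_ge hKP]

theorem storage_hedge_eq (P K smin s smax splus : ℝ) :
    P * (s - if K ≤ P then smin else smax) - K * (splus - if K ≤ P then smin else smax) =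
      (if K ≤ P then (P - K) * (s - smin) else (K - P) * (smax - s)) + K * (s - splus) := by
  split_ifs <;> ring

theorem stmt12_general (P K smin s smax : ℝ) :
    letI Cap : ℝ := if K ≤ P then (P - K) * (s - smin) else 0
    letI Floor : ℝ := if P ≤ K then (K - P) * (smax - s) else 0
    letI sstar : ℝ := if K ≤ P then smin else smax
    (Cap + Floor = if K ≤ P then (P - K) * (s - smin) else (K - P) * (smax - s)) ∧
    (∀ splus ∈ Set.Icc smin smax,
      P * (s - sstar) - K * (splus - sstar) = Cap + Floor + K * (s - splus)) := by
  refine ⟨cap_add_floor_eq .., fun splus _ => ?_⟩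
  rw [cap_add_floor_eq]
  exact storage_hedge_eq P K smin s smax splus

/-- Decomposition of the perfect storage hedge into a cap (strike `K`, volume `s - s_min`),
a floor (strike `K`, volume `s_max - s`), and an `S`-shaped component `K·(s - s⁺)`. -/
theorem stmt12 (P K smin s smax : ℝ) (hs1 : smin ≤ s) (hs2 : s ≤ smax) :
    letI Cap : ℝ := if K ≤ P then (P - K) * (s - smin) else 0
    letI Floor : ℝ := if P ≤ K then (K - P) * (smax - s) else 0
    letI sstar : ℝ := if K ≤ P then smin else smax
    (Cap + Floor = if K ≤ P then (P - K) * (s - smin) else (K - P) * (smax - s)) ∧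
    (∀ splus ∈ Set.Icc smin smax,
      P * (s - sstar) - K * (splus - sstar) = Cap + Floor + K * (s - splus)) :=
  stmt12_general P K smin s smax
end
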